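/- Let N ∈ ℕ, let f : [0,1] → ℝ^N be continuous, and let u ∈ [0,1]. Then for every multi-index I = (i_1,…,i_m), S^I_{[0,1]}(f) = Σ_{j=0}^{m} S^{(i_1,…,i_j)}_{[0,u]}(f) · S^{(i_{j+1},…,i_m)}_{[u,1]}(f), where the signature coefficient with respect to the empty multi-index equals 1. (Chen's identity: the path signature is multiplicative under concatenation of paths, S(α * β) = S(α) ⊗ S(β).) -/

import Mathlib

/-!
Split the simplex `a ≤ t₁ ≤ ⋯ ≤ tₘ ≤ b` at `u` according to the number `n` of coordinates
lying below `u`. Cutting a point of the `n`-th piece into its first `n` and its last `m - n`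
coordinates identifies that piece with the product of the simplices over `[a, u]` and `[u, b]`,
and the integrand factors accordingly, so by Fubini the integral over the piece is the
product of two signature coefficients. Distinct pieces meet only inside hyperplanes `tᵢ = u`,
which are null, so the integral over the simplex is the sum over the pieces.
-/

open MeasureTheory

/-- The simplex of nondecreasing `m`-tuples with entries in `[a,b]`. -/
def simplex (m : ℕ) (a b : ℝ) : Set (Fin m → ℝ) :=
  {t | (∀ j, t j ∈ Set.Icc a b) ∧ ∀ j k : Fin m, j ≤ k → t j ≤ t k}

/-- The signature coefficient of `f : [a,b] → ℝ^N` over `[a,b]` with respect to a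
multi-index `I`; for the empty multi-index (`m = 0`) it equals `1`. -/
noncomputable def sig {N : ℕ} (a b : ℝ) (f : ℝ → Fin N → ℝ) {m : ℕ}
    (I : Fin m → Fin N) : ℝ :=
  ∫ t in simplex m a b, ∏ j, f (t j) (I j)

theorem Fin.monotone_append_iff {α : Type*} [Preorder α] {n k : ℕ} {x : Fin n → α}
    {y : Fin k → α} :
    Monotone (Fin.append x y) ↔ Monotone x ∧ Monotone y ∧ ∀ i j, x i ≤ y j := by
  refine ⟨fun h => ⟨fun i j hij => ?_, fun i j hij => ?_, fun i j => ?_⟩, ?_⟩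
  · simpa using h ((Fin.strictMono_castAdd k).monotone hij)
  · simpa using h ((Fin.strictMono_natAdd n).monotone hij)
  · have : Fin.castAdd k i ≤ Fin.natAdd n j :=
      Fin.le_def.2 (by rw [Fin.val_castAdd, Fin.val_natAdd]; omega)
    simpa using h this
  · rintro ⟨hx, hy, hxy⟩ i j hij
    induction i using Fin.addCases <;> induction j using Fin.addCases <;>
      simp only [Fin.le_def, Fin.val_castAdd, Fin.val_natAdd] at hij <;>
      simp only [Fin.append_left, Fin.append_right]
    · exact hx (Fin.le_def.2 hij)
    · exact hxy _ _
    · omega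
    · exact hy (Fin.le_def.2 (by omega))

namespace MeasurableEquiv

def finAppend (α : Type*) [MeasurableSpace α] (n k : ℕ) :
    (Fin n → α) × (Fin k → α) ≃ᵐ (Fin (n + k) → α) :=
  (sumPiEquivProdPi fun _ => α).symm.trans (piCongrLeft (fun _ => α) finSumFinEquiv)

@[simp]
theorem finAppend_apply {α : Type*} [MeasurableSpace α] {n k : ℕ}
    (x : (Fin n → α) × (Fin k → α)) :
    finAppend α n k x = Fin.append x.1 x.2 := by
  ext i
  refine Fin.addCases (fun i => ?_) (fun i => ?_) i
  · rw [Fin.append_left, ← finSumFinEquiv_apply_left]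
    exact piCongrLeft_apply_apply (β := fun _ => α) finSumFinEquiv _ (Sum.inl i)
  · rw [Fin.append_right, ← finSumFinEquiv_apply_right]
    exact piCongrLeft_apply_apply (β := fun _ => α) finSumFinEquiv _ (Sum.inr i)

theorem volume_measurePreserving_finAppend (α : Type*) [MeasureSpace α]
    [SigmaFinite (volume : Measure α)] (n k : ℕ) :
    MeasurePreserving (finAppend α n k) :=
  (volume_measurePreserving_piCongrLeft (fun _ => α) finSumFinEquiv).comp
    (volume_measurePreserving_sumPiEquivProdPi_symm fun _ => α)

end MeasurableEquiv

theorem Monotone.exists_cut {α : Type*} [LinearOrder α] {m : ℕ} {t : Fin m → α}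
    (ht : Monotone t) (u : α) :
    ∃ n ≤ m, ∀ p : Fin m, t p ∈ if (p : ℕ) < n then Set.Iic u else Set.Ici u := by
  classical
  have hex : ∃ n : ℕ, ∀ p : Fin m, n ≤ (p : ℕ) → u ≤ t p :=
    ⟨m, fun p hp => absurd p.2 (by omega)⟩
  refine ⟨Nat.find hex, Nat.find_min' hex fun p hp => absurd p.2 (by omega), fun p => ?_⟩
  split_ifs with hp
  · obtain ⟨q, hpq, hq⟩ : ∃ q : Fin m, (p : ℕ) ≤ q ∧ t q < u := by
      simpa using Nat.find_min hex hp
    exact (ht (Fin.le_def.2 hpq)).trans hq.le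
  · exact Nat.find_spec hex p (not_lt.1 hp)

theorem mem_simplex_iff {m : ℕ} {a b : ℝ} {t : Fin m → ℝ} :
    t ∈ simplex m a b ↔ (∀ j, t j ∈ Set.Icc a b) ∧ Monotone t :=
  Iff.rfl

theorem isCompact_simplex (m : ℕ) (a b : ℝ) : IsCompact (simplex m a b) := by
  have : simplex m a b = Set.univ.pi (fun _ => Set.Icc a b) ∩ {t | Monotone t} := by
    ext t
    simp only [mem_simplex_iff, Set.mem_inter_iff, Set.mem_univ_pi, Set.mem_ofPred_eq]
  rw [this]
  exact (isCompact_univ_pi fun _ => isCompact_Icc).inter_right isClosed_monotone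

theorem integrableOn_simplex {N m : ℕ} {a b : ℝ} {f : ℝ → Fin N → ℝ}
    (hf : ContinuousOn f (Set.Icc a b)) (I : Fin m → Fin N) :
    IntegrableOn (fun t : Fin m → ℝ => ∏ j, f (t j) (I j)) (simplex m a b) :=
  ContinuousOn.integrableOn_compact (isCompact_simplex m a b) <|
    continuousOn_finsetProd _ fun j _ => (continuous_apply (I j)).comp_continuousOn <|
      hf.comp (continuous_apply j).continuousOn fun _ ht => (mem_simplex_iff.1 ht).1 j

def simplexPiece (m : ℕ) (a u b : ℝ) (n : ℕ) : Set (Fin m → ℝ) :=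
  simplex m a b ∩ Set.univ.pi fun p => if (p : ℕ) < n then Set.Iic u else Set.Ici u

theorem measurableSet_simplexPiece (m : ℕ) (a u b : ℝ) (n : ℕ) :
    MeasurableSet (simplexPiece m a u b n) :=
  ((isCompact_simplex m a b).isClosed.inter <| isClosed_set_pi fun p _ => by
    split_ifs
    exacts [isClosed_Iic, isClosed_Ici]).measurableSet

theorem simplex_eq_iUnion_simplexPiece (m : ℕ) (a u b : ℝ) :
    simplex m a b = ⋃ n : Fin (m + 1), simplexPiece m a u b n := by
  ext t
  simp only [simplexPiece, Set.mem_iUnion]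
  constructor
  · intro ht
    obtain ⟨n, hn, hcut⟩ := (mem_simplex_iff.1 ht).2.exists_cut u
    exact ⟨⟨n, by omega⟩, ht, fun p _ => hcut p⟩
  · rintro ⟨n, ht, -⟩
    exact ht

theorem pairwise_aedisjoint_simplexPiece (m : ℕ) (a u b : ℝ) :
    Pairwise (Function.onFun (AEDisjoint volume)
      fun n : Fin (m + 1) => simplexPiece m a u b n) := by
  refine Pairwise.of_lt fun j k hjk => ?_
  have hj : (j : ℕ) < m := by omega
  refine measure_mono_null (t := {t | t ⟨j, hj⟩ = u}) ?_ ?_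
  · rintro t ⟨⟨-, htj⟩, -, htk⟩
    have hle : u ≤ t ⟨j, hj⟩ := by simpa using htj ⟨j, hj⟩ trivial
    have hge : t ⟨j, hj⟩ ≤ u := by simpa [hjk] using htk ⟨j, hj⟩ trivial
    exact le_antisymm hge hle
  · rw [volume_pi]
    exact Measure.pi_hyperplane _ _ _

theorem append_mem_simplexPiece_iff {n k : ℕ} {a u b : ℝ} (hau : a ≤ u) (hub : u ≤ b)
    {x : Fin n → ℝ} {y : Fin k → ℝ} :
    Fin.append x y ∈ simplexPiece (n + k) a u b n ↔ x ∈ simplex n a u ∧ y ∈ simplex k u b := by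
  simp only [simplexPiece, Set.mem_inter_iff, mem_simplex_iff, Fin.monotone_append_iff,
    Set.mem_univ_pi, Fin.forall_fin_add, Fin.append_left, Fin.append_right, Fin.val_castAdd,
    Fin.val_natAdd, Fin.is_lt, if_true, add_lt_iff_neg_left, Nat.not_lt_zero, if_false,
    Set.mem_Icc, Set.mem_Iic, Set.mem_Ici]
  constructor
  · rintro ⟨⟨⟨hx, hy⟩, hmx, hmy, -⟩, hxu, huy⟩
    exact ⟨⟨fun i => ⟨(hx i).1, hxu i⟩, hmx⟩, fun j => ⟨huy j, (hy j).2⟩, hmy⟩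
  · rintro ⟨⟨hx, hmx⟩, hy, hmy⟩
    exact ⟨⟨⟨fun i => ⟨(hx i).1, (hx i).2.trans hub⟩, fun j => ⟨hau.trans (hy j).1, (hy j).2⟩⟩,
      hmx, hmy, fun i j => (hx i).2.trans (hy j).1⟩, fun i => (hx i).2, fun j => (hy j).1⟩

/-- Stated for `n + k = m` rather than on `Fin (n + k)`, so that it applies to the split
`j + (m - j) = m` without casts. -/
theorem setIntegral_simplexPiece {N n k m : ℕ} (h : n + k = m) {a u b : ℝ} (hau : a ≤ u)
    (hub : u ≤ b) (f : ℝ → Fin N → ℝ) (I : Fin m → Fin N) :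
    ∫ t in simplexPiece m a u b n, ∏ j, f (t j) (I j) =
      sig a u f (fun p : Fin n => I ⟨p, by omega⟩) *
        sig u b f (fun q : Fin k => I ⟨n + q, by omega⟩) := by
  subst h
  have hpre : MeasurableEquiv.finAppend ℝ n k ⁻¹' simplexPiece (n + k) a u b n =
      simplex n a u ×ˢ simplex k u b := by
    ext x
    simp [append_mem_simplexPiece_iff hau hub]
  rw [← (MeasurableEquiv.volume_measurePreserving_finAppend ℝ n k).setIntegral_preimage_emb
    (MeasurableEquiv.measurableEmbedding _), hpre, Measure.volume_eq_prod]
  simp only [MeasurableEquiv.finAppend_apply, Fin.prod_univ_add, Fin.append_left,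
    Fin.append_right]
  exact setIntegral_prod_mul (fun x : Fin n → ℝ => ∏ j, f (x j) (I (Fin.castAdd k j)))
    (fun y : Fin k → ℝ => ∏ j, f (y j) (I (Fin.natAdd n j))) _ _

/-- **Chen's identity**: the path signature is multiplicative under concatenation,
`S^I_{[0,1]}(f) = Σ_{j=0}^m S^{(i_1,…,i_j)}_{[0,u]}(f) · S^{(i_{j+1},…,i_m)}_{[u,1]}(f)`. -/
theorem chen_identity (N : ℕ) (f : ℝ → Fin N → ℝ)
    (hf : ContinuousOn f (Set.Icc 0 1)) (u : ℝ) (hu : u ∈ Set.Icc (0:ℝ) 1)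
    (m : ℕ) (I : Fin m → Fin N) :
    sig 0 1 f I =
      ∑ j : Fin (m + 1),
        sig 0 u f (fun p : Fin (j : ℕ) =>
            I ⟨p.1, by have h1 := p.2; have h2 := j.2; omega⟩) *
        sig u 1 f (fun p : Fin (m - (j : ℕ)) =>
            I ⟨(j : ℕ) + p.1, by have h1 := p.2; have h2 := j.2; omega⟩) := by
  have hint := integrableOn_simplex hf I
  rw [simplex_eq_iUnion_simplexPiece m 0 u 1] at hint
  rw [sig, simplex_eq_iUnion_simplexPiece m 0 u 1,
    integral_iUnion_ae (s := fun n : Fin (m + 1) => simplexPiece m 0 u 1 n)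
      (fun n => (measurableSet_simplexPiece m 0 u 1 n).nullMeasurableSet)
      (pairwise_aedisjoint_simplexPiece m 0 u 1) hint, tsum_fintype]
  exact Finset.sum_congr rfl fun j _ =>
    setIntegral_simplexPiece (Nat.add_sub_cancel' (Nat.lt_succ_iff.1 j.2)) hu.1 hu.2 f I
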